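/- For every integer L ≥ 1, every K ∈ {1,…,L}, every ε > 0 and every s ∈ ℝ^L, the smoothed top-K operator approximates the top-K operator with error |top_{K,ε}(s) − top_K(s)| ≤ ε·C_{K,L}, where C_{K,L} = K·√(2 log L). -/

import Mathlib

open MeasureTheory ProbabilityTheory

/-- The list of coordinates of `s : ℝ^L` sorted in decreasing order. -/
noncomputable def descSort {L : ℕ} (s : Fin L → ℝ) : List ℝ :=
  (Multiset.sort (Multiset.map s Finset.univ.val) (· ≤ ·)).reverse

/-- `kthLargest K s` is the `K`-th largest coordinate of `s` (1-indexed), i.e. `s_(K)`. -/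
noncomputable def kthLargest {L : ℕ} (K : ℕ) (s : Fin L → ℝ) : ℝ :=
  (descSort s).getD (K - 1) 0

/-- `topsum K s` is the sum of the `K` largest coordinates of `s`,
with the convention `topsum 0 s = 0`. -/
noncomputable def topsum {L : ℕ} (K : ℕ) (s : Fin L → ℝ) : ℝ :=
  ((descSort s).take K).sum

/-- The standard Gaussian measure `N(0, Id_L)` on `ℝ^L`:
the coordinates are i.i.d. standard normal random variables. -/
noncomputable def stdGaussian (L : ℕ) : Measure (EuclideanSpace ℝ (Fin L)) :=
  Measure.map (WithLp.toLp 2) (Measure.pi (fun _ : Fin L => gaussianReal 0 1))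

/-- The smoothed top-sum `topsumSm K ε s = E[topsum K (s + ε Z)]`, `Z ∼ N(0, Id_L)`. -/
noncomputable def topsumSm {L : ℕ} (K : ℕ) (ε : ℝ) (s : EuclideanSpace ℝ (Fin L)) : ℝ :=
  ∫ z, topsum K (s + ε • z) ∂(stdGaussian L)

/-- The smoothed top-K operator `topSm K ε s = topsumSm K ε s - topsumSm (K-1) ε s`. -/
noncomputable def topSm {L : ℕ} (K : ℕ) (ε : ℝ) (s : EuclideanSpace ℝ (Fin L)) : ℝ :=
  topsumSm K ε s - topsumSm (K - 1) ε s

/-- The 0/1 vector whose entries equal 1 exactly at the `K` coordinates carrying the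
`K` largest values of `v` (well defined when the `K`-th and `(K+1)`-th largest values
of `v` are distinct). -/
noncomputable def argtops {L : ℕ} (K : ℕ) (v : Fin L → ℝ) : Fin L → ℝ :=
  fun i => if kthLargest K v ≤ v i then 1 else 0

/-! `kthLargest K` is monotone and commutes with adding constants, hence
`top_K s - ε max_i (-Z_i) ≤ top_K (s + ε Z) ≤ top_K s + ε max_i Z_i` pointwise. Since
`topsum_K - topsum_{K-1} = top_K`, the smoothed operator is `E[top_K (s + ε Z)]`, and both
`E[max_i Z_i]` and `E[max_i (-Z_i)]` are at most `√(2 log L)` by the sub-Gaussian maximal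
inequality. -/

open Real Finset
open scoped NNReal

namespace List

variable {α : Type*} [LinearOrder α] {l : List α}

lemma Pairwise.length_filter_getElem_lt_le (hl : l.Pairwise (· ≥ ·)) {j : ℕ}
    (hj : j < l.length) : (l.filter (fun a => l[j] < a)).length ≤ j := by
  have hdrop : (l.drop j).filter (fun a => l[j] < a) = [] := by
    refine filter_eq_nil_iff.mpr fun a ha => ?_
    obtain ⟨k, hk, rfl⟩ := mem_iff_getElem.mp ha
    rw [getElem_drop, decide_eq_true_eq, not_lt]
    rcases Nat.eq_zero_or_pos k with rfl | hk0
    · simp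
    · exact pairwise_iff_getElem.mp hl j (j + k) hj (by simp at hk; omega) (by omega)
  calc (l.filter (fun a => l[j] < a)).length
      = ((l.take j ++ l.drop j).filter (fun a => l[j] < a)).length := by
        rw [take_append_drop]
    _ = ((l.take j).filter (fun a => l[j] < a)).length := by
        rw [filter_append, hdrop, append_nil]
    _ ≤ (l.take j).length := length_filter_le _ _
    _ ≤ j := by simp

lemma Pairwise.lt_length_filter_lt (hl : l.Pairwise (· ≥ ·)) {j : ℕ} (hj : j < l.length)
    {y : α} (hy : y < l[j]) : j < (l.filter (fun a => y < a)).length := by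
  have htake : (l.take (j + 1)).filter (fun a => y < a) = l.take (j + 1) := by
    refine filter_eq_self.mpr fun a ha => ?_
    obtain ⟨k, hk, rfl⟩ := mem_iff_getElem.mp ha
    rw [getElem_take, decide_eq_true_eq]
    rcases (show k ≤ j by simp at hk; omega).eq_or_lt with rfl | hkj
    · exact hy
    · exact hy.trans_le (pairwise_iff_getElem.mp hl k j (by omega) hj hkj)
  have := ((l.take_sublist (j + 1)).filter (fun a => y < a)).length_le
  rw [htake, length_take] at this
  omega

end List

section OrderStatistics

variable {L : ℕ}

lemma coe_descSort (v : Fin L → ℝ) : (descSort v : Multiset ℝ) = Multiset.map v univ.val := by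
  rw [descSort, Multiset.coe_reverse, Multiset.sort_eq]

lemma length_descSort (v : Fin L → ℝ) : (descSort v).length = L := by
  simpa using congrArg Multiset.card (coe_descSort v)

lemma pairwise_descSort (v : Fin L → ℝ) : (descSort v).Pairwise (· ≥ ·) := by
  rw [descSort, List.pairwise_reverse]
  exact Multiset.pairwise_sort _ _

lemma length_filter_descSort (v : Fin L → ℝ) (y : ℝ) :
    ((descSort v).filter (fun a => y < a)).length = #{i | y < v i} := by
  rw [← Multiset.coe_card, ← Multiset.filter_coe, coe_descSort, Multiset.filter_map,
    Multiset.card_map, card_def, filter_val]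
  rfl

lemma kthLargest_eq_getElem {K : ℕ} (hK1 : 1 ≤ K) (hKL : K ≤ L) (v : Fin L → ℝ) :
    kthLargest K v = (descSort v)[K - 1]'(by rw [length_descSort]; omega) :=
  List.getD_eq_getElem ..

lemma card_kthLargest_lt_le {K : ℕ} (hK1 : 1 ≤ K) (hKL : K ≤ L) (v : Fin L → ℝ) :
    #{i | kthLargest K v < v i} ≤ K - 1 := by
  rw [← length_filter_descSort, kthLargest_eq_getElem hK1 hKL]
  exact (pairwise_descSort v).length_filter_getElem_lt_le _

lemma le_card_lt_of_lt_kthLargest {K : ℕ} (hK1 : 1 ≤ K) (hKL : K ≤ L) (v : Fin L → ℝ)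
    {y : ℝ} (hy : y < kthLargest K v) : K ≤ #{i | y < v i} := by
  rw [kthLargest_eq_getElem hK1 hKL] at hy
  have := (pairwise_descSort v).lt_length_filter_lt _ hy
  rw [length_filter_descSort] at this
  omega

lemma kthLargest_le_add_of_le_add {K : ℕ} (hK1 : 1 ≤ K) (hKL : K ≤ L) {v w : Fin L → ℝ}
    {m : ℝ} (h : ∀ i, v i ≤ w i + m) : kthLargest K v ≤ kthLargest K w + m := by
  by_contra! hlt
  have hv := le_card_lt_of_lt_kthLargest hK1 hKL v hlt
  have hw : #{i | kthLargest K w + m < v i} ≤ #{i | kthLargest K w < w i} :=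
    card_le_card fun i hi => by
      simp only [mem_filter, mem_univ, true_and] at hi ⊢; linarith [h i]
  have := card_kthLargest_lt_le hK1 hKL w
  omega

lemma lipschitzWith_kthLargest {K : ℕ} (hK1 : 1 ≤ K) (hKL : K ≤ L) :
    LipschitzWith 1 (kthLargest K : (Fin L → ℝ) → ℝ) :=
  LipschitzWith.of_le_add fun v w => kthLargest_le_add_of_le_add hK1 hKL fun i => by
    have := dist_le_pi_dist v w i
    rw [Real.dist_eq] at this
    linarith [le_abs_self (v i - w i)]

lemma topsum_succ (K : ℕ) (v : Fin L → ℝ) :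
    topsum (K + 1) v = topsum K v + kthLargest (K + 1) v := by
  rw [topsum, topsum, kthLargest, Nat.add_sub_cancel]
  rcases lt_or_ge K (descSort v).length with h | h
  · rw [List.sum_take_succ _ _ h, List.getD_eq_getElem _ _ h]
  · rw [List.take_of_length_le h, List.take_of_length_le (by omega),
      List.getD_eq_default _ _ h, add_zero]

end OrderStatistics

lemma le_sqrt_of_forall_pos_mul_le {a b c : ℝ} (hb : 0 ≤ b) (hc : 0 ≤ c)
    (h : ∀ t > 0, t * a ≤ b + c * t ^ 2 / 2) : a ≤ √(2 * c * b) := by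
  by_contra! hlt
  have ha : 0 < a := (sqrt_nonneg _).trans_lt hlt
  rcases hc.eq_or_lt with rfl | hc
  · have := h ((b + 1) / a) (by positivity)
    rw [div_mul_cancel₀ _ ha.ne'] at this
    linarith
  · have hopt := h (a / c) (by positivity)
    rw [show c * (a / c) ^ 2 / 2 = a / c * a / 2 by field_simp] at hopt
    have : a ^ 2 ≤ 2 * c * b := calc
      a ^ 2 = c * (a / c * a) := by field_simp
      _ ≤ c * (2 * b) := mul_le_mul_of_nonneg_left (by linarith) hc.le
      _ = 2 * c * b := by ring
    exact hlt.not_ge ((le_sqrt' ha).mpr this)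

section SubgaussianMaximal

variable {Ω ι : Type*} {mΩ : MeasurableSpace Ω} {μ : Measure Ω}

lemma integrable_finset_sup' {s : Finset ι} (hs : s.Nonempty) {X : ι → Ω → ℝ}
    (hX : ∀ i ∈ s, Integrable (X i) μ) : Integrable (fun ω => s.sup' hs (X · ω)) μ := by
  simp_rw [← Finset.sup'_apply]
  exact sup'_induction (p := (Integrable · μ)) hs X (fun _ h₁ _ h₂ => h₁.sup h₂) hX

/-- By Jensen, `exp (t 𝔼 max X) ≤ 𝔼 exp (t max X) ≤ ∑ mgf (X i) t`; then optimize over `t`. -/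
theorem integral_sup'_le_of_hasSubgaussianMGF [IsProbabilityMeasure μ] [Fintype ι] [Nonempty ι]
    {X : ι → Ω → ℝ} {c : ℝ≥0} (hX : ∀ i, HasSubgaussianMGF (X i) c μ) :
    ∫ ω, univ.sup' univ_nonempty (X · ω) ∂μ ≤ √(2 * c * Real.log (Fintype.card ι)) := by
  set M := fun ω => univ.sup' univ_nonempty (X · ω)
  have hM : Integrable M μ := integrable_finset_sup' _ fun i _ => (hX i).integrable
  refine le_sqrt_of_forall_pos_mul_le (Real.log_nonneg (by exact_mod_cast Fintype.card_pos))
    c.2 fun t ht => exp_le_exp.mp ?_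
  have hexp_le : ∀ ω, exp (t * M ω) ≤ ∑ i, exp (t * X i ω) := fun ω => by
    obtain ⟨i, -, hi⟩ := exists_mem_eq_sup' univ_nonempty (X · ω)
    simp only [M, hi]
    exact single_le_sum (f := fun i => exp (t * X i ω)) (fun j _ => (exp_pos _).le) (mem_univ i)
  have hsum : Integrable (fun ω => ∑ i, exp (t * X i ω)) μ :=
    integrable_finsetSum _ fun i _ => (hX i).integrable_exp_mul t
  have hexpM : Integrable (fun ω => exp (t * M ω)) μ :=
    hsum.mono' (continuous_exp.comp_aestronglyMeasurable (hM.1.const_mul t))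
      (ae_of_all _ fun ω => (norm_of_nonneg (exp_pos _).le).trans_le (hexp_le ω))
  calc exp (t * ∫ ω, M ω ∂μ) = exp (∫ ω, t * M ω ∂μ) := by rw [integral_const_mul]
    _ ≤ ∫ ω, exp (t * M ω) ∂μ :=
        convexOn_exp.map_integral_le continuous_exp.continuousOn isClosed_univ
          (ae_of_all _ fun _ => Set.mem_univ _) (hM.const_mul t) hexpM
    _ ≤ ∫ ω, ∑ i, exp (t * X i ω) ∂μ := integral_mono hexpM hsum hexp_le
    _ = ∑ i, mgf (X i) μ t := integral_finsetSum _ fun i _ => (hX i).integrable_exp_mul t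
    _ ≤ ∑ _i : ι, exp (c * t ^ 2 / 2) := sum_le_sum fun i _ => (hX i).mgf_le t
    _ = exp (Real.log (Fintype.card ι) + c * t ^ 2 / 2) := by
        rw [exp_add, exp_log (by exact_mod_cast Fintype.card_pos), sum_const, card_univ,
          nsmul_eq_mul]

end SubgaussianMaximal

section Perturbation

variable {Ω : Type*} {mΩ : MeasurableSpace Ω} {μ : Measure Ω} {L K : ℕ}

lemma kthLargest_add_le [Nonempty (Fin L)] (hK1 : 1 ≤ K) (hKL : K ≤ L) (v w : Fin L → ℝ) :
    kthLargest K (v + w) ≤ kthLargest K v + univ.sup' univ_nonempty w :=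
  kthLargest_le_add_of_le_add hK1 hKL fun i => by
    rw [Pi.add_apply]
    gcongr
    exact le_sup' w (mem_univ i)

lemma kthLargest_le_add_sup'_neg [Nonempty (Fin L)] (hK1 : 1 ≤ K) (hKL : K ≤ L)
    (v w : Fin L → ℝ) :
    kthLargest K v ≤ kthLargest K (v + w) + univ.sup' univ_nonempty (-w) := by
  simpa using kthLargest_add_le hK1 hKL (v + w) (-w)

variable [IsProbabilityMeasure μ] {W : Ω → Fin L → ℝ}

lemma integrable_kthLargest_add (hW : ∀ i, Integrable (W · i) μ) (hK1 : 1 ≤ K) (hKL : K ≤ L)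
    (v : Fin L → ℝ) :
    Integrable (fun ω => kthLargest K (v + W ω)) μ := by
  have : Nonempty (Fin L) := ⟨⟨0, by omega⟩⟩
  have hmeas : AEMeasurable W μ := aemeasurable_pi_lambda W fun i => (hW i).aemeasurable
  refine integrable_of_le_of_le (g₁ := fun ω => kthLargest K v - univ.sup' univ_nonempty (-W ω))
    (g₂ := fun ω => kthLargest K v + univ.sup' univ_nonempty (W ω))
    (((lipschitzWith_kthLargest hK1 hKL).continuous.comp
      (continuous_const_add v)).measurable.comp_aemeasurable hmeas).aestronglyMeasurable
    (ae_of_all _ fun ω => sub_le_iff_le_add.mpr (kthLargest_le_add_sup'_neg hK1 hKL v (W ω)))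
    (ae_of_all _ fun ω => kthLargest_add_le hK1 hKL v (W ω))
    ((integrable_const _).sub (integrable_finset_sup' _ fun i _ => (hW i).neg))
    ((integrable_const _).add (integrable_finset_sup' _ fun i _ => hW i))

lemma integrable_topsum_add (hW : ∀ i, Integrable (W · i) μ) {J : ℕ} (hJ : J ≤ L)
    (v : Fin L → ℝ) :
    Integrable (fun ω => topsum J (v + W ω)) μ := by
  induction J with
  | zero => simp [topsum]
  | succ J ih =>
    simp_rw [topsum_succ]
    exact (ih (by omega)).add (integrable_kthLargest_add hW (by omega) hJ v)

lemma integral_kthLargest_add_sub_le [Nonempty (Fin L)] (hW : ∀ i, Integrable (W · i) μ)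
    (hK1 : 1 ≤ K) (hKL : K ≤ L) (v : Fin L → ℝ) :
    ∫ ω, kthLargest K (v + W ω) ∂μ - kthLargest K v ≤ ∫ ω, univ.sup' univ_nonempty (W ω) ∂μ := by
  have hmax : Integrable (fun ω => univ.sup' univ_nonempty (W ω)) μ :=
    integrable_finset_sup' univ_nonempty fun i _ => hW i
  have h : ∫ ω, kthLargest K (v + W ω) ∂μ
      ≤ ∫ ω, (kthLargest K v + univ.sup' univ_nonempty (W ω)) ∂μ :=
    integral_mono (integrable_kthLargest_add hW hK1 hKL v) ((integrable_const _).add hmax)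
      fun ω => kthLargest_add_le hK1 hKL v (W ω)
  rw [integral_add (integrable_const _) hmax, integral_const, probReal_univ, one_smul] at h
  linarith

lemma sub_integral_kthLargest_add_le [Nonempty (Fin L)] (hW : ∀ i, Integrable (W · i) μ)
    (hK1 : 1 ≤ K) (hKL : K ≤ L) (v : Fin L → ℝ) :
    kthLargest K v - ∫ ω, kthLargest K (v + W ω) ∂μ ≤ ∫ ω, univ.sup' univ_nonempty (-W ω) ∂μ := by
  have hmax : Integrable (fun ω => univ.sup' univ_nonempty (-W ω)) μ :=
    integrable_finset_sup' univ_nonempty fun i _ => (hW i).neg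
  have hkth := integrable_kthLargest_add hW hK1 hKL v
  have h : ∫ _ω, kthLargest K v ∂μ
      ≤ ∫ ω, (kthLargest K (v + W ω) + univ.sup' univ_nonempty (-W ω)) ∂μ :=
    integral_mono (integrable_const _) (hkth.add hmax)
      fun ω => kthLargest_le_add_sup'_neg hK1 hKL v (W ω)
  rw [integral_add hkth hmax, integral_const, probReal_univ, one_smul] at h
  linarith

end Perturbation

section StdGaussian

variable {L : ℕ}

instance : IsProbabilityMeasure (stdGaussian L) :=
  Measure.isProbabilityMeasure_map (WithLp.measurable_toLp 2 _).aemeasurable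

lemma map_eval_stdGaussian (i : Fin L) :
    (stdGaussian L).map (fun z => z i) = gaussianReal 0 1 := by
  rw [_root_.stdGaussian, Measure.map_map (by fun_prop) (WithLp.measurable_toLp 2 _)]
  exact (measurePreserving_eval _ i).map_eq

lemma hasSubgaussianMGF_id_gaussianReal (v : ℝ≥0) : HasSubgaussianMGF id v (gaussianReal 0 v) :=
  ⟨integrable_exp_mul_gaussianReal, fun t => by simp [mgf_id_gaussianReal]⟩

lemma hasSubgaussianMGF_eval_stdGaussian (i : Fin L) :
    HasSubgaussianMGF (fun z : EuclideanSpace ℝ (Fin L) => z i) 1 (stdGaussian L) := by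
  rw [← HasSubgaussianMGF.id_map_iff (by fun_prop), map_eval_stdGaussian]
  exact hasSubgaussianMGF_id_gaussianReal 1

lemma integral_sup'_const_mul_eval_stdGaussian_le [Nonempty (Fin L)] (a : ℝ) :
    ∫ z, univ.sup' univ_nonempty (fun i => a * z i) ∂stdGaussian L ≤ |a| * √(2 * Real.log L) := by
  refine (integral_sup'_le_of_hasSubgaussianMGF
    fun i => (hasSubgaussianMGF_eval_stdGaussian i).const_mul a).trans_eq ?_
  rw [Fintype.card_fin, ← sqrt_sq_eq_abs, ← sqrt_mul (sq_nonneg a)]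
  congr 1
  change 2 * (a ^ 2 * 1) * Real.log L = _
  ring

end StdGaussian

lemma topSm_eq_integral_kthLargest {L K : ℕ} (hK1 : 1 ≤ K) (hKL : K ≤ L) (ε : ℝ)
    (s : EuclideanSpace ℝ (Fin L)) :
    topSm K ε s = ∫ z, kthLargest K (⇑s + fun i => ε * z i) ∂stdGaussian L := by
  have hW : ∀ i, Integrable (fun z : EuclideanSpace ℝ (Fin L) => ε * z i) (stdGaussian L) :=
    fun i => (hasSubgaussianMGF_eval_stdGaussian i).integrable.const_mul ε
  obtain ⟨k, rfl⟩ : ∃ k, K = k + 1 := ⟨K - 1, by omega⟩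
  have hsm : ∀ J, topsumSm J ε s = ∫ z, topsum J (⇑s + fun i => ε * z i) ∂stdGaussian L :=
    fun J => rfl
  rw [topSm, hsm, hsm, Nat.add_sub_cancel,
    ← integral_sub (integrable_topsum_add hW hKL s) (integrable_topsum_add hW (by omega) s)]
  simp only [topsum_succ, add_sub_cancel_left]

theorem abs_topSm_sub_top_le_general (L K : ℕ) (hK1 : 1 ≤ K) (hKL : K ≤ L)
    (ε : ℝ) (hε : 0 < ε) (s : EuclideanSpace ℝ (Fin L)) :
    |topSm K ε s - kthLargest K s| ≤ ε * ((K : ℝ) * Real.sqrt (2 * Real.log L)) := by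
  have : Nonempty (Fin L) := ⟨⟨0, by omega⟩⟩
  have hW : ∀ i, Integrable (fun z : EuclideanSpace ℝ (Fin L) => ε * z i) (stdGaussian L) :=
    fun i => (hasSubgaussianMGF_eval_stdGaussian i).integrable.const_mul ε
  have hup := integral_kthLargest_add_sub_le hW hK1 hKL s
  have hlow := sub_integral_kthLargest_add_le hW hK1 hKL s
  have hmax := integral_sup'_const_mul_eval_stdGaussian_le (L := L) ε
  have hmax' := integral_sup'_const_mul_eval_stdGaussian_le (L := L) (-ε)
  simp only [neg_mul, abs_neg, abs_of_pos hε] at hmax hmax'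
  have hK : ε * √(2 * Real.log L) ≤ ε * (K * √(2 * Real.log L)) := by
    gcongr
    exact le_mul_of_one_le_left (sqrt_nonneg _) (by exact_mod_cast hK1)
  rw [topSm_eq_integral_kthLargest hK1 hKL, abs_sub_le_iff]
  constructor
  · exact hup.trans (hmax.trans hK)
  · exact hlow.trans (hmax'.trans hK)

/-- `|topSm K ε s - top_K s| ≤ ε·C_{K,L}` with `C_{K,L} = K√(2 log L)`. -/
theorem abs_topSm_sub_top_le (L K : ℕ) (hL : 1 ≤ L) (hK1 : 1 ≤ K) (hKL : K ≤ L)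
    (ε : ℝ) (hε : 0 < ε) (s : EuclideanSpace ℝ (Fin L)) :
    |topSm K ε s - kthLargest K s| ≤ ε * ((K : ℝ) * Real.sqrt (2 * Real.log L)) :=
  abs_topSm_sub_top_le_general L K hK1 hKL ε hε s
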